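/- In the Hermitian dilation setup, it holds that inf over Q_0^d ∈ ℝ^{(d₁+d₂)×2r} with ‖Q_0^d‖_w = 1 of ‖Q_0^dL̄_1^d − L̄_2^dQ_0^d‖_w is at least σ_r − 4rμ_0(τ_0 + rκ_0) − ε_0. Moreover, if σ_r > 2κ_0·r·√μ_0, then L̄_1^d is an invertible 2r×2r matrix. -/

import Mathlib

open Matrix BigOperators

/-- Entrywise max norm: largest absolute value of an entry. -/
noncomputable def matMaxNorm {m n : Type*} [Fintype m] [Fintype n] (M : Matrix m n ℝ) : ℝ :=
  ⨆ i, ⨆ j, |M i j|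

/-- Matrix ∞-norm: maximum absolute row sum. -/
noncomputable def matInfNorm {m n : Type*} [Fintype m] [Fintype n] (M : Matrix m n ℝ) : ℝ :=
  ⨆ i, ∑ j, |M i j|

/-- Matrix 1-norm: maximum absolute column sum. -/
noncomputable def matOneNorm {m n : Type*} [Fintype m] [Fintype n] (M : Matrix m n ℝ) : ℝ :=
  ⨆ j, ∑ i, |M i j|

/-- Euclidean norm of a vector. -/
noncomputable def vec2Norm {n : Type*} [Fintype n] (x : n → ℝ) : ℝ :=
  Real.sqrt (∑ i, (x i) ^ 2)

/-- ℓ∞ norm of a vector. -/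
noncomputable def vecSupNorm {n : Type*} [Fintype n] (x : n → ℝ) : ℝ :=
  ⨆ i, |x i|

/-- Spectral norm (operator 2-norm) of a matrix. -/
noncomputable def matSpecNorm {m n : Type*} [Fintype m] [Fintype n] (M : Matrix m n ℝ) : ℝ :=
  sSup {c : ℝ | ∃ x : n → ℝ, vec2Norm x ≤ 1 ∧ c = vec2Norm (M.mulVec x)}

/-- Coherence of a d × r matrix with orthonormal columns. -/
noncomputable def matCoherence {d r : ℕ} (V : Matrix (Fin d) (Fin r) ℝ) : ℝ :=
  ((d : ℝ) / (r : ℝ)) * ⨆ i, ∑ j, (V i j) ^ 2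

/-- Inverse of the positive semidefinite square root of a matrix (junk value otherwise). -/
noncomputable def matInvSqrt {n : Type*} [Fintype n] [DecidableEq n] (S : Matrix n n ℝ) :
    Matrix n n ℝ :=
  letI := Classical.propDecidable
  if h : S.PosSemidef then
    ((h.1.eigenvectorUnitary : Matrix n n ℝ) * Matrix.diagonal ((↑) ∘ (√·) ∘ h.1.eigenvalues) *
      (star h.1.eigenvectorUnitary : Matrix n n ℝ))⁻¹ else 0

/-- Weighted max-norm for matrices with d₁ + d₂ rows. -/
noncomputable def wMaxNorm {d₁ d₂ : ℕ} {n : Type*} [Fintype n]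
    (M : Matrix (Fin d₁ ⊕ Fin d₂) n ℝ) : ℝ :=
  matMaxNorm (Matrix.of fun i j =>
    (Sum.elim (fun _ : Fin d₁ => Real.sqrt d₁) (fun _ : Fin d₂ => Real.sqrt d₂) i) * M i j)

/-- Huber loss with parameter α. -/
noncomputable def huberLoss (α x : ℝ) : ℝ := if |x| ≤ α then x ^ 2 else 2 * α * |x| - α ^ 2

/-!
Because the columns of `V^d_⊥` complete those of `V^d`, `L̄₂^d` is the dilation of
`F = (I - UUᵀ)(A + E)(I - VVᵀ) = (A - A_r) + (I - UUᵀ) E (I - VVᵀ)`. Coherence gives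
`‖UUᵀ‖_∞ ≤ r √μ₀`, and every entry of `UᵀEV` is at most `κ₀`, so the row sums of `L̄₂^d`,
rescaled by the weights `√d₁, √d₂`, are at most `ε₀ + (1 + 2r√μ₀) τ₀ + r² √μ₀ κ₀`.
Meanwhile `L̄₁^d` is a diagonal matrix with entries `±σ_i`, all at least `σ_r` in absolute value,
plus `E₁₁^d`, whose entries are at most `κ₀`. At an entry where the weighted max-norm of `Q` is
attained, the diagonal part contributes at least `σ_r`, the `E₁₁^d` part at most `2rκ₀`, and
the `L̄₂^d` part at most the bound above; as `μ₀ ≥ 1`, the losses total at most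
`4rμ₀(τ₀ + rκ₀) + ε₀`. Invertibility follows from the same splitting by Gershgorin's theorem.
-/

section MatrixNorms

theorem abs_mul_apply_le_sum {m n p : Type*} [Fintype n] (X : Matrix m n ℝ) (Y : Matrix n p ℝ)
    (i : m) (k : p) : |(X * Y) i k| ≤ ∑ j, |X i j| * |Y j k| := by
  simpa only [Matrix.mul_apply, abs_mul] using
    Finset.abs_sum_le_sum_abs (fun j => X i j * Y j k) Finset.univ

variable {m n p : Type*} [Fintype m] [Fintype n] [Fintype p]

attribute [local instance] Matrix.linftyOpNormedAddCommGroup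

theorem matInfNorm_eq_norm (M : Matrix m n ℝ) : matInfNorm M = ‖M‖ := by
  rw [linfty_opNorm_def, Finset.sup_univ_eq_ciSup, NNReal.coe_iSup, matInfNorm]
  simp [Real.norm_eq_abs]

theorem matOneNorm_eq_matInfNorm_transpose (M : Matrix m n ℝ) :
    matOneNorm M = matInfNorm Mᵀ := rfl

theorem matInfNorm_nonneg (M : Matrix m n ℝ) : 0 ≤ matInfNorm M :=
  matInfNorm_eq_norm M ▸ norm_nonneg M

theorem matInfNorm_mul_le (X : Matrix m n ℝ) (Y : Matrix n p ℝ) :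
    matInfNorm (X * Y) ≤ matInfNorm X * matInfNorm Y := by
  simpa only [matInfNorm_eq_norm] using linfty_opNorm_mul X Y

theorem matInfNorm_add_le (X Y : Matrix m n ℝ) :
    matInfNorm (X + Y) ≤ matInfNorm X + matInfNorm Y := by
  simpa only [matInfNorm_eq_norm] using norm_add_le X Y

theorem sum_abs_le_matInfNorm (M : Matrix m n ℝ) (i : m) : ∑ j, |M i j| ≤ matInfNorm M :=
  le_ciSup (f := fun i => ∑ j, |M i j|) (Set.finite_range _).bddAbove i

theorem matInfNorm_le_card_mul_of_abs_le [Nonempty m] {c : ℝ} {M : Matrix m n ℝ}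
    (h : ∀ i j, |M i j| ≤ c) : matInfNorm M ≤ Fintype.card n * c :=
  ciSup_le fun i => by simpa using Finset.sum_le_sum fun j (_ : j ∈ Finset.univ) => h i j

theorem abs_le_matMaxNorm (M : Matrix m n ℝ) (i : m) (j : n) : |M i j| ≤ matMaxNorm M :=
  (le_ciSup (Set.finite_range _).bddAbove j).trans
    (le_ciSup (f := fun i => ⨆ j, |M i j|) (Set.finite_range _).bddAbove i)

theorem matMaxNorm_nonneg (M : Matrix m n ℝ) : 0 ≤ matMaxNorm M :=
  Real.iSup_nonneg fun _ => Real.iSup_nonneg fun _ => abs_nonneg _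

theorem abs_mul_apply_le (X : Matrix m n ℝ) (Y : Matrix n p ℝ) (i : m) (k : p) :
    |(X * Y) i k| ≤ matInfNorm X * matMaxNorm Y :=
  calc |(X * Y) i k| ≤ ∑ j, |X i j| * |Y j k| := abs_mul_apply_le_sum X Y i k
    _ ≤ ∑ j, |X i j| * matMaxNorm Y := by
        gcongr with j; exact abs_le_matMaxNorm Y j k
    _ ≤ matInfNorm X * matMaxNorm Y := by
        rw [← Finset.sum_mul]
        exact mul_le_mul_of_nonneg_right (sum_abs_le_matInfNorm X i) (matMaxNorm_nonneg Y)

end MatrixNorms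

section WeightedMaxNorm

variable {ι κ : Type*} [Fintype ι] [Fintype κ]

noncomputable def weightedMaxNorm (w : ι → ℝ) (M : Matrix ι κ ℝ) : ℝ :=
  matMaxNorm (of fun i j => w i * M i j)

theorem matMaxNorm_of_isEmpty_left [IsEmpty ι] (M : Matrix ι κ ℝ) : matMaxNorm M = 0 :=
  Real.iSup_of_isEmpty _

theorem matMaxNorm_of_isEmpty_right [IsEmpty κ] (M : Matrix ι κ ℝ) : matMaxNorm M = 0 := by
  simp only [matMaxNorm, Real.iSup_of_isEmpty, Real.iSup_const_zero]

theorem exists_abs_eq_matMaxNorm [Nonempty ι] [Nonempty κ] (M : Matrix ι κ ℝ) :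
    ∃ i j, |M i j| = matMaxNorm M := by
  obtain ⟨⟨i, j⟩, hmax⟩ := Finite.exists_max fun p : ι × κ => |M p.1 p.2|
  exact ⟨i, j, le_antisymm (abs_le_matMaxNorm M i j)
    (ciSup_le fun i' => ciSup_le fun j' => hmax (i', j'))⟩

variable {w : ι → ℝ}

theorem abs_sub_abs_sub_abs_le (a b c : ℝ) : |a| - |b| - |c| ≤ |a + b - c| := by
  have := abs_add_three (a + b - c) (-b) c
  rw [abs_neg, show a + b - c + -b + c = a by ring] at this
  linarith

theorem mul_abs_le_weightedMaxNorm (hw : ∀ i, 0 ≤ w i) (M : Matrix ι κ ℝ) (i : ι) (j : κ) :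
    w i * |M i j| ≤ weightedMaxNorm w M := by
  simpa only [weightedMaxNorm, of_apply, abs_mul, abs_of_nonneg (hw i)] using
    abs_le_matMaxNorm (of fun i j => w i * M i j) i j

theorem exists_mul_abs_eq_weightedMaxNorm (hw : ∀ i, 0 ≤ w i) {M : Matrix ι κ ℝ}
    (hM : weightedMaxNorm w M ≠ 0) : ∃ i j, w i * |M i j| = weightedMaxNorm w M := by
  have : Nonempty ι := not_isEmpty_iff.mp fun _ => hM (matMaxNorm_of_isEmpty_left _)
  have : Nonempty κ := not_isEmpty_iff.mp fun _ => hM (matMaxNorm_of_isEmpty_right _)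
  obtain ⟨i, j, h⟩ := exists_abs_eq_matMaxNorm (of fun i j => w i * M i j)
  exact ⟨i, j, by rwa [of_apply, abs_mul, abs_of_nonneg (hw i)] at h⟩

theorem sub_le_weightedMaxNorm_mul_sub_mul [DecidableEq κ] (hw : ∀ i, 0 < w i)
    {d : κ → ℝ} {N : Matrix κ κ ℝ} {L : Matrix ι ι ℝ} {σ c B : ℝ}
    (hd : ∀ j, σ ≤ |d j|) (hN : ∀ j l, |N j l| ≤ c) (hL : ∀ i, w i * ∑ k, |L i k| / w k ≤ B)
    {Q : Matrix ι κ ℝ} (hQ : weightedMaxNorm w Q = 1) :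
    σ - Fintype.card κ * c - B ≤ weightedMaxNorm w (Q * (diagonal d + N) - L * Q) := by
  have hw0 i := (hw i).le
  have hQle i j : w i * |Q i j| ≤ 1 := hQ ▸ mul_abs_le_weightedMaxNorm hw0 Q i j
  -- test at an entry where the weighted max-norm of `Q` is attained
  obtain ⟨i, j, hij⟩ := exists_mul_abs_eq_weightedMaxNorm hw0 (hQ ▸ one_ne_zero)
  rw [hQ] at hij
  have hentry : (Q * (diagonal d + N) - L * Q) i j = Q i j * d j + (Q * N) i j - (L * Q) i j := by
    simp only [Matrix.mul_add, Matrix.sub_apply, Matrix.add_apply, mul_diagonal]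
  have hQd : σ ≤ w i * |Q i j * d j| := by
    rw [abs_mul, ← mul_assoc, hij, one_mul]; exact hd j
  have hQN : w i * |(Q * N) i j| ≤ Fintype.card κ * c := by
    calc w i * |(Q * N) i j| ≤ w i * ∑ k, |Q i k| * |N k j| :=
          mul_le_mul_of_nonneg_left (abs_mul_apply_le_sum Q N i j) (hw0 i)
      _ = ∑ k, w i * |Q i k| * |N k j| := by simp only [Finset.mul_sum, mul_assoc]
      _ ≤ ∑ _k : κ, 1 * c := Finset.sum_le_sum fun k _ =>
          mul_le_mul (hQle i k) (hN k j) (abs_nonneg _) zero_le_one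
      _ = Fintype.card κ * c := by simp
  have hLQ : w i * |(L * Q) i j| ≤ B := by
    refine (mul_le_mul_of_nonneg_left (abs_mul_apply_le_sum L Q i j) (hw0 i)).trans
      ((mul_le_mul_of_nonneg_left (Finset.sum_le_sum fun k _ => ?_) (hw0 i)).trans (hL i))
    rw [le_div_iff₀ (hw k), mul_assoc]
    exact mul_le_of_le_one_right (abs_nonneg _) ((mul_comm _ _).trans_le (hQle k j))
  calc σ - Fintype.card κ * c - B
      ≤ w i * |Q i j * d j| - w i * |(Q * N) i j| - w i * |(L * Q) i j| := by linarith
    _ ≤ w i * |(Q * (diagonal d + N) - L * Q) i j| := by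
        rw [hentry, ← mul_sub, ← mul_sub]
        exact mul_le_mul_of_nonneg_left (abs_sub_abs_sub_abs_le _ _ _) (hw0 i)
    _ ≤ _ := mul_abs_le_weightedMaxNorm hw0 _ i j

theorem isUnit_det_diagonal_add [DecidableEq κ] {d : κ → ℝ} {N : Matrix κ κ ℝ} {σ c : ℝ}
    (hd : ∀ j, σ ≤ |d j|) (hN : ∀ j l, |N j l| ≤ c) (hσ : Fintype.card κ * c < σ) :
    IsUnit (diagonal d + N).det := by
  refine isUnit_iff_ne_zero.mpr (det_ne_zero_of_sum_row_lt_diag fun k => ?_)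
  have hrow : ∑ j, |N k j| ≤ Fintype.card κ * c := by
    simpa using Finset.sum_le_sum fun j (_ : j ∈ Finset.univ) => hN k j
  have hsplit := Finset.sum_erase_add Finset.univ (fun j => |N k j|) (Finset.mem_univ k)
  have hoff : ∀ j ∈ Finset.univ.erase k, ‖(diagonal d + N) k j‖ = |N k j| := fun j hj => by
    rw [Matrix.add_apply, diagonal_apply_ne _ (Finset.ne_of_mem_erase hj).symm, zero_add,
      Real.norm_eq_abs]
  rw [Finset.sum_congr rfl hoff, Matrix.add_apply, diagonal_apply_eq, Real.norm_eq_abs]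
  have := abs_sub_abs_le_abs_sub (d k) (-N k k)
  rw [abs_neg, sub_neg_eq_add] at this
  linarith [hd k]

end WeightedMaxNorm

theorem le_abs_sum_elim_neg {ι : Type*} {f : ι → ℝ} {s : ℝ} (h : ∀ i, s ≤ f i) (j : ι ⊕ ι) :
    s ≤ |Sum.elim f (fun i => -f i) j| := by
  rcases j with i | i
  · exact (h i).trans (le_abs_self _)
  · exact (h i).trans ((le_abs_self _).trans (abs_neg _).ge)

theorem sum_abs_le_sqrt_card_mul_sum_sq {n : Type*} [Fintype n] (x : n → ℝ) :
    ∑ i, |x i| ≤ √(Fintype.card n * ∑ i, x i ^ 2) := by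
  simpa only [sq_abs, Finset.card_univ] using Real.le_sqrt_of_sq_le
    (sq_sum_le_card_mul_sum_sq (s := Finset.univ) (f := fun i => |x i|))

section Coherence

variable {d r : ℕ} {U : Matrix (Fin d) (Fin r) ℝ} {μ : ℝ}

theorem sum_sq_col_eq_one (hU : Uᵀ * U = 1) (j : Fin r) : ∑ a, U a j ^ 2 = 1 := by
  simpa only [Matrix.mul_apply, transpose_apply, one_apply_eq, sq] using congrFun (congrFun hU j) j

theorem matOneNorm_le_sqrt (hU : Uᵀ * U = 1) : matOneNorm U ≤ √d :=
  Real.iSup_le (fun j => by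
    simpa only [sum_sq_col_eq_one hU j, mul_one, Fintype.card_fin] using
      sum_abs_le_sqrt_card_mul_sum_sq fun a => U a j) (Real.sqrt_nonneg _)

theorem abs_transpose_mul_mul_apply_le {n k : Type*} [Fintype n] [Fintype k]
    {E : Matrix (Fin d) n ℝ} {V : Matrix n k ℝ} {κ : ℝ} (hU : Uᵀ * U = 1) (hEV : √d * matMaxNorm (E * V) ≤ κ)
    (j : Fin r) (l : k) : |(Uᵀ * E * V) j l| ≤ κ := by
  rw [Matrix.mul_assoc]
  exact (abs_mul_apply_le Uᵀ (E * V) j l).trans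
    ((mul_le_mul_of_nonneg_right (matOneNorm_le_sqrt hU) (matMaxNorm_nonneg _)).trans hEV)

theorem sum_sq_row_le_of_matCoherence_le (hr : 0 < r) (hμ : matCoherence U ≤ μ) (a : Fin d) :
    ∑ j, U a j ^ 2 ≤ r * (μ / d) := by
  have hd : (0 : ℝ) < d := Nat.cast_pos.mpr (Fin.pos a)
  have hr' : (0 : ℝ) < r := Nat.cast_pos.mpr hr
  have hrow : ∑ j, U a j ^ 2 ≤ ⨆ i, ∑ j, U i j ^ 2 :=
    le_ciSup (f := fun i => ∑ j, U i j ^ 2) (Set.finite_range _).bddAbove a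
  calc ∑ j, U a j ^ 2 = r / d * (d / r * ∑ j, U a j ^ 2) := by field_simp
    _ ≤ r / d * μ := by
        gcongr; exact (mul_le_mul_of_nonneg_left hrow (by positivity)).trans hμ
    _ = r * (μ / d) := by ring

theorem matInfNorm_le_of_matCoherence_le (hr : 0 < r) (hμ : matCoherence U ≤ μ) :
    matInfNorm U ≤ r * √(μ / d) := by
  refine Real.iSup_le (fun a => ?_) (by positivity)
  calc ∑ j, |U a j| ≤ √(r * ∑ j, U a j ^ 2) := by
        simpa only [Fintype.card_fin] using sum_abs_le_sqrt_card_mul_sum_sq fun j => U a j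
    _ ≤ √(r * (r * (μ / d))) := by
        gcongr; exact sum_sq_row_le_of_matCoherence_le hr hμ a
    _ = r * √(μ / d) := by
        rw [← mul_assoc, Real.sqrt_mul (by positivity), Real.sqrt_mul_self (by positivity)]

theorem one_le_matCoherence (hU : Uᵀ * U = 1) (hr : 0 < r) : 1 ≤ matCoherence U := by
  have htotal : ∑ a, ∑ j, U a j ^ 2 = r := by
    rw [Finset.sum_comm]; simp [sum_sq_col_eq_one hU]
  have hd : 0 < d := by
    by_contra h
    obtain rfl : d = 0 := by omega
    simp only [Finset.univ_eq_empty, Finset.sum_empty] at htotal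
    exact (Nat.cast_pos.mpr hr).ne htotal
  have hd' : (0 : ℝ) < d := Nat.cast_pos.mpr hd
  have hr' : (0 : ℝ) < r := Nat.cast_pos.mpr hr
  obtain ⟨a, -, ha⟩ := Finset.exists_le_of_sum_le (f := fun _ => (r : ℝ) / d)
    (g := fun a => ∑ j, U a j ^ 2) (Finset.univ_nonempty_iff.mpr ⟨⟨0, hd⟩⟩) (by
      rw [htotal, Finset.sum_const, Finset.card_univ, Fintype.card_fin, nsmul_eq_mul,
        mul_div_cancel₀ _ hd'.ne'])
  have hrow : ∑ j, U a j ^ 2 ≤ ⨆ i, ∑ j, U i j ^ 2 :=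
    le_ciSup (f := fun i => ∑ j, U i j ^ 2) (Set.finite_range _).bddAbove a
  calc (1 : ℝ) = d / r * (r / d) := by field_simp
    _ ≤ matCoherence U := mul_le_mul_of_nonneg_left (ha.trans hrow) (by positivity)

end Coherence

section BalancedNorm

variable {d₁ d₂ : ℕ}

/-- `τ₀ = balancedNorm E` and `ε₀ = balancedNorm (A - A_r)`. -/
noncomputable def balancedNorm (M : Matrix (Fin d₁) (Fin d₂) ℝ) : ℝ :=
  max (Real.sqrt ((d₁ : ℝ) / (d₂ : ℝ)) * matInfNorm M)
    (Real.sqrt ((d₂ : ℝ) / (d₁ : ℝ)) * matOneNorm M)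

theorem balancedNorm_nonneg (M : Matrix (Fin d₁) (Fin d₂) ℝ) : 0 ≤ balancedNorm M :=
  le_max_of_le_left (mul_nonneg (Real.sqrt_nonneg _) (matInfNorm_nonneg M))

theorem balancedNorm_add_le (X Y : Matrix (Fin d₁) (Fin d₂) ℝ) :
    balancedNorm (X + Y) ≤ balancedNorm X + balancedNorm Y := by
  refine max_le ?_ ?_
  · calc _ ≤ √(d₁ / d₂ : ℝ) * matInfNorm X + √(d₁ / d₂ : ℝ) * matInfNorm Y := by
          rw [← mul_add]; gcongr; exact matInfNorm_add_le X Y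
      _ ≤ _ := add_le_add (le_max_left _ _) (le_max_left _ _)
  · calc _ ≤ √(d₂ / d₁ : ℝ) * matOneNorm X + √(d₂ / d₁ : ℝ) * matOneNorm Y := by
          rw [← mul_add]; gcongr; exact matInfNorm_add_le Xᵀ Yᵀ
      _ ≤ _ := add_le_add (le_max_right _ _) (le_max_right _ _)

theorem balancedNorm_neg (M : Matrix (Fin d₁) (Fin d₂) ℝ) : balancedNorm (-M) = balancedNorm M := by
  simp only [balancedNorm, matOneNorm, matInfNorm, Matrix.neg_apply, abs_neg]

theorem balancedNorm_sub_le (X Y : Matrix (Fin d₁) (Fin d₂) ℝ) :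
    balancedNorm (X - Y) ≤ balancedNorm X + balancedNorm Y := by
  simpa only [sub_eq_add_neg, balancedNorm_neg] using balancedNorm_add_le X (-Y)

theorem balancedNorm_mul_left_le {P : Matrix (Fin d₁) (Fin d₁) ℝ} {c : ℝ}
    (hP : matInfNorm P ≤ c) (hPt : matOneNorm P ≤ c) (M : Matrix (Fin d₁) (Fin d₂) ℝ) :
    balancedNorm (P * M) ≤ c * balancedNorm M := by
  have hc : 0 ≤ c := (matInfNorm_nonneg P).trans hP
  refine max_le ?_ ?_
  · calc _ ≤ √(d₁ / d₂ : ℝ) * (c * matInfNorm M) := by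
          gcongr
          exact (matInfNorm_mul_le P M).trans
            (mul_le_mul_of_nonneg_right hP (matInfNorm_nonneg M))
      _ ≤ _ := by rw [mul_left_comm]; gcongr; exact le_max_left _ _
  · calc _ ≤ √(d₂ / d₁ : ℝ) * (matOneNorm M * c) := by
          gcongr
          rw [matOneNorm_eq_matInfNorm_transpose, transpose_mul]
          exact (matInfNorm_mul_le Mᵀ Pᵀ).trans
            (mul_le_mul_of_nonneg_left hPt (matInfNorm_nonneg Mᵀ))
      _ ≤ _ := by rw [mul_comm (matOneNorm M), mul_left_comm]; gcongr; exact le_max_right _ _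

theorem balancedNorm_mul_right_le {P : Matrix (Fin d₂) (Fin d₂) ℝ} {c : ℝ}
    (hP : matInfNorm P ≤ c) (hPt : matOneNorm P ≤ c) (M : Matrix (Fin d₁) (Fin d₂) ℝ) :
    balancedNorm (M * P) ≤ c * balancedNorm M := by
  have hc : 0 ≤ c := (matInfNorm_nonneg P).trans hP
  refine max_le ?_ ?_
  · calc _ ≤ √(d₁ / d₂ : ℝ) * (matInfNorm M * c) := by
          gcongr
          exact (matInfNorm_mul_le M P).trans
            (mul_le_mul_of_nonneg_left hP (matInfNorm_nonneg M))
      _ ≤ _ := by rw [mul_comm (matInfNorm M), mul_left_comm]; gcongr; exact le_max_left _ _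
  · calc _ ≤ √(d₂ / d₁ : ℝ) * (c * matOneNorm M) := by
          gcongr
          rw [matOneNorm_eq_matInfNorm_transpose, transpose_mul]
          exact (matInfNorm_mul_le Pᵀ Mᵀ).trans
            (mul_le_mul_of_nonneg_right hPt (matInfNorm_nonneg Mᵀ))
      _ ≤ _ := by rw [mul_left_comm]; gcongr; exact le_max_right _ _

theorem sqrt_div_mul_matInfNorm_mul_mul_transpose_le (hd₁ : 0 < d₁) (hd₂ : 0 < d₂) {r : ℕ}
    {U : Matrix (Fin d₁) (Fin r) ℝ} {V : Matrix (Fin d₂) (Fin r) ℝ} {G : Matrix (Fin r) (Fin r) ℝ}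
    {μ g : ℝ} (hU : matInfNorm U ≤ r * √(μ / d₁)) (hV : matOneNorm V ≤ √d₂)
    (hG : matInfNorm G ≤ g) :
    √(d₁ / d₂ : ℝ) * matInfNorm (U * G * Vᵀ) ≤ r * √μ * g := by
  have hd₁' : (0 : ℝ) < d₁ := Nat.cast_pos.mpr hd₁
  have hd₂' : (0 : ℝ) < d₂ := Nat.cast_pos.mpr hd₂
  calc √(d₁ / d₂ : ℝ) * matInfNorm (U * G * Vᵀ)
      ≤ √(d₁ / d₂ : ℝ) * (r * √(μ / d₁) * g * √d₂) := by
        gcongr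
        refine (matInfNorm_mul_le _ _).trans (mul_le_mul ?_ hV (matInfNorm_nonneg _) ?_)
        · exact (matInfNorm_mul_le U G).trans
            (mul_le_mul hU hG (matInfNorm_nonneg G) (by positivity))
        · exact mul_nonneg (by positivity) ((matInfNorm_nonneg G).trans hG)
    _ = r * √μ * g := by
        rw [Real.sqrt_div' _ hd₂'.le, Real.sqrt_div' _ hd₁'.le]
        field_simp

theorem balancedNorm_mul_mul_transpose_le (hd₁ : 0 < d₁) (hd₂ : 0 < d₂) {r : ℕ}
    {U : Matrix (Fin d₁) (Fin r) ℝ} {V : Matrix (Fin d₂) (Fin r) ℝ} {G : Matrix (Fin r) (Fin r) ℝ}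
    {μ g : ℝ} (hU : matInfNorm U ≤ r * √(μ / d₁)) (hU₁ : matOneNorm U ≤ √d₁)
    (hV : matInfNorm V ≤ r * √(μ / d₂)) (hV₁ : matOneNorm V ≤ √d₂)
    (hG : matInfNorm G ≤ g) (hG₁ : matOneNorm G ≤ g) :
    balancedNorm (U * G * Vᵀ) ≤ r * √μ * g := by
  refine max_le (sqrt_div_mul_matInfNorm_mul_mul_transpose_le hd₁ hd₂ hU hV₁ hG) ?_
  have hT : (U * G * Vᵀ)ᵀ = V * Gᵀ * Uᵀ := by
    simp only [transpose_mul, transpose_transpose, Matrix.mul_assoc]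
  rw [matOneNorm_eq_matInfNorm_transpose, hT]
  exact sqrt_div_mul_matInfNorm_mul_mul_transpose_le (G := Gᵀ) hd₂ hd₁ hV hU₁ hG₁

end BalancedNorm

section Dilation

variable {d₁ d₂ : ℕ}

noncomputable def dilationWeight (d₁ d₂ : ℕ) : Fin d₁ ⊕ Fin d₂ → ℝ :=
  Sum.elim (fun _ => Real.sqrt d₁) (fun _ => Real.sqrt d₂)

theorem wMaxNorm_eq_weightedMaxNorm {n : Type*} [Fintype n] (M : Matrix (Fin d₁ ⊕ Fin d₂) n ℝ) :
    wMaxNorm M = weightedMaxNorm (dilationWeight d₁ d₂) M :=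
  rfl

theorem dilationWeight_pos (hd₁ : 0 < d₁) (hd₂ : 0 < d₂) (i : Fin d₁ ⊕ Fin d₂) :
    0 < dilationWeight d₁ d₂ i := by
  rcases i with _ | _ <;> simp [dilationWeight, hd₁, hd₂]

theorem dilationWeight_mul_sum_abs_fromBlocks_le (F : Matrix (Fin d₁) (Fin d₂) ℝ)
    (i : Fin d₁ ⊕ Fin d₂) :
    dilationWeight d₁ d₂ i * ∑ k, |fromBlocks 0 F Fᵀ 0 i k| / dilationWeight d₁ d₂ k ≤
      balancedNorm F := by
  rcases i with a | b
  · calc _ = √(d₁ / d₂ : ℝ) * ∑ b, |F a b| := by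
          simp only [dilationWeight, Fintype.sum_sum_type, Sum.elim_inl, Sum.elim_inr,
            fromBlocks_apply₁₁, fromBlocks_apply₁₂, Matrix.zero_apply, abs_zero, zero_div,
            Finset.sum_const_zero, zero_add, Finset.mul_sum, Real.sqrt_div' _ (Nat.cast_nonneg _)]
          exact Finset.sum_congr rfl fun _ _ => by ring
      _ ≤ _ := le_max_of_le_left (by gcongr; exact sum_abs_le_matInfNorm F a)
  · calc _ = √(d₂ / d₁ : ℝ) * ∑ a, |F a b| := by
          simp only [dilationWeight, Fintype.sum_sum_type, Sum.elim_inl, Sum.elim_inr,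
            fromBlocks_apply₂₁, fromBlocks_apply₂₂, transpose_apply, Matrix.zero_apply, abs_zero,
            zero_div, Finset.sum_const_zero, add_zero, Finset.mul_sum,
            Real.sqrt_div' _ (Nat.cast_nonneg _)]
          exact Finset.sum_congr rfl fun _ _ => by ring
      _ ≤ _ := le_max_of_le_right (by gcongr; exact sum_abs_le_matInfNorm Fᵀ b)

end Dilation

section DilationBasis

variable {m n k : Type*}

/-- The paper's `V^d`; its columns are eigenvectors of the dilation of `U Σ Vᵀ`. -/
noncomputable def dilationBasis (U : Matrix m k ℝ) (V : Matrix n k ℝ) : Matrix (m ⊕ n) (k ⊕ k) ℝ :=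
  (Real.sqrt 2)⁻¹ • fromBlocks U U V (-V)

theorem inv_sqrt_two_mul_self : (Real.sqrt 2)⁻¹ * (Real.sqrt 2)⁻¹ = (2⁻¹ : ℝ) := by
  rw [← mul_inv, Real.mul_self_sqrt zero_le_two]

variable {U : Matrix m k ℝ} {V : Matrix n k ℝ}

theorem dilationBasis_transpose_mul_self [Fintype m] [Fintype n] [DecidableEq k]
    (hU : Uᵀ * U = 1) (hV : Vᵀ * V = 1) : (dilationBasis U V)ᵀ * dilationBasis U V = 1 := by
  rw [dilationBasis, transpose_smul, fromBlocks_transpose, Matrix.smul_mul, Matrix.mul_smul,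
    smul_smul, inv_sqrt_two_mul_self, fromBlocks_multiply, ← fromBlocks_one, fromBlocks_smul]
  simp only [transpose_neg, Matrix.neg_mul, Matrix.mul_neg, neg_neg, hU, hV, add_neg_cancel]
  congr 1 <;> simp [← two_smul ℝ (1 : Matrix k k ℝ), smul_smul]

theorem dilationBasis_mul_transpose [Fintype k] :
    dilationBasis U V * (dilationBasis U V)ᵀ = fromBlocks (U * Uᵀ) 0 0 (V * Vᵀ) := by
  rw [dilationBasis, transpose_smul, fromBlocks_transpose, Matrix.smul_mul, Matrix.mul_smul,
    smul_smul, inv_sqrt_two_mul_self, fromBlocks_multiply, fromBlocks_smul]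
  simp only [transpose_neg, Matrix.neg_mul, Matrix.mul_neg, neg_neg, add_neg_cancel, smul_zero]
  congr 1 <;> simp [← two_smul ℝ (_ * _ : Matrix _ _ ℝ), smul_smul]

theorem dilationBasis_transpose_mul_dilation_mul [Fintype m] [Fintype n] (E : Matrix m n ℝ) :
    (dilationBasis U V)ᵀ * fromBlocks 0 E Eᵀ 0 * dilationBasis U V =
      (2⁻¹ : ℝ) • fromBlocks (Uᵀ * E * V + (Uᵀ * E * V)ᵀ) ((Uᵀ * E * V)ᵀ - Uᵀ * E * V)
        (Uᵀ * E * V - (Uᵀ * E * V)ᵀ) (-(Uᵀ * E * V + (Uᵀ * E * V)ᵀ)) := by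
  rw [dilationBasis, transpose_smul, fromBlocks_transpose, Matrix.smul_mul, Matrix.smul_mul,
    Matrix.mul_smul, smul_smul, inv_sqrt_two_mul_self, fromBlocks_multiply, fromBlocks_multiply]
  simp only [transpose_neg, transpose_mul, transpose_transpose, Matrix.neg_mul, Matrix.mul_neg,
    Matrix.mul_zero, add_zero, zero_add, Matrix.mul_assoc]
  congr 2 <;> abel

theorem abs_dilationBasis_transpose_mul_dilation_mul_apply_le [Fintype m] [Fintype n]
    {E : Matrix m n ℝ} {κ : ℝ} (hG : ∀ j l, |(Uᵀ * E * V) j l| ≤ κ) (p q : k ⊕ k) :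
    |((dilationBasis U V)ᵀ * fromBlocks 0 E Eᵀ 0 * dilationBasis U V) p q| ≤ κ := by
  have half_le {x y : ℝ} (hx : |x| ≤ κ) (hy : |y| ≤ κ) : |2⁻¹ * (x + y)| ≤ κ := by
    rw [abs_mul, abs_of_pos (by norm_num : (0 : ℝ) < 2⁻¹)]
    linarith [abs_add_le x y]
  rw [dilationBasis_transpose_mul_dilation_mul]
  rcases p with j | j <;> rcases q with l | l <;>
    simp only [Matrix.smul_apply, fromBlocks_apply₁₁, fromBlocks_apply₁₂, fromBlocks_apply₂₁,
      fromBlocks_apply₂₂, Matrix.add_apply, Matrix.neg_apply, transpose_apply,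
      smul_eq_mul, sub_eq_add_neg, mul_neg, abs_neg]
  all_goals first
    | exact half_le (hG _ _) (hG _ _)
    | exact half_le (hG _ _) ((abs_neg _).trans_le (hG _ _))

end DilationBasis

section Compression

theorem transpose_one_sub_mul_transpose {m k : Type*} [Fintype k] [DecidableEq m]
    (X : Matrix m k ℝ) : (1 - X * Xᵀ)ᵀ = 1 - X * Xᵀ := by
  rw [transpose_sub, transpose_one, transpose_mul, transpose_transpose]

variable {m n k : Type*} [Fintype m] [Fintype n] [Fintype k]

theorem mul_transpose_eq_one_sub_of_orthogonal {l : Type*} [Fintype l] [DecidableEq m]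
    [DecidableEq k] [DecidableEq l] {X : Matrix m k ℝ} {Y : Matrix m l ℝ} (hX : Xᵀ * X = 1)
    (hY : Yᵀ * Y = 1) (hXY : Xᵀ * Y = 0)
    (hcard : Fintype.card m = Fintype.card k + Fintype.card l) :
    Y * Yᵀ = 1 - X * Xᵀ := by
  have hYX : Yᵀ * X = 0 := by rw [← transpose_transpose X, ← transpose_mul, hXY, transpose_zero]
  have h : fromRows Xᵀ Yᵀ * fromCols X Y = 1 := by
    rw [fromRows_mul_fromCols, hX, hY, hXY, hYX, fromBlocks_one]
  have e : m ≃ k ⊕ l := Fintype.equivOfCardEq (by rw [Fintype.card_sum, hcard])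
  rw [← (fromCols_mul_fromRows_eq_one_comm e X Y Xᵀ Yᵀ).mpr h, fromCols_mul_fromRows,
    add_sub_cancel_left]

theorem fromBlocks_diag_mul_dilation_mul_fromBlocks_diag {P : Matrix m m ℝ} {Q : Matrix n n ℝ}
    (hP : Pᵀ = P) (hQ : Qᵀ = Q) (M : Matrix m n ℝ) :
    fromBlocks P 0 0 Q * fromBlocks 0 M Mᵀ 0 * fromBlocks P 0 0 Q =
      fromBlocks 0 (P * M * Q) (P * M * Q)ᵀ 0 := by
  simp only [fromBlocks_multiply, Matrix.mul_zero, Matrix.zero_mul, add_zero, zero_add,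
    transpose_mul, hP, hQ, Matrix.mul_assoc]

variable {U : Matrix m k ℝ} {V : Matrix n k ℝ}

theorem compressed_dilation_eq {l : Type*} [Fintype l] [DecidableEq m] [DecidableEq n]
    [DecidableEq k] [DecidableEq l] (hU : Uᵀ * U = 1) (hV : Vᵀ * V = 1)
    {W : Matrix (m ⊕ n) l ℝ} (hW : Wᵀ * W = 1) (hUVW : (dilationBasis U V)ᵀ * W = 0)
    (hcard : Fintype.card (m ⊕ n) = Fintype.card (k ⊕ k) + Fintype.card l) (M : Matrix m n ℝ) :
    W * (Wᵀ * fromBlocks 0 M Mᵀ 0 * W) * Wᵀ =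
      fromBlocks 0 ((1 - U * Uᵀ) * M * (1 - V * Vᵀ)) ((1 - U * Uᵀ) * M * (1 - V * Vᵀ))ᵀ 0 := by
  have hproj : W * Wᵀ = fromBlocks (1 - U * Uᵀ) 0 0 (1 - V * Vᵀ) := by
    rw [mul_transpose_eq_one_sub_of_orthogonal (dilationBasis_transpose_mul_self hU hV) hW hUVW
      hcard, dilationBasis_mul_transpose, ← fromBlocks_one]
    simp only [sub_eq_add_neg, fromBlocks_neg, fromBlocks_add, neg_zero, add_zero]
  rw [show W * (Wᵀ * fromBlocks 0 M Mᵀ 0 * W) * Wᵀ = W * Wᵀ * fromBlocks 0 M Mᵀ 0 * (W * Wᵀ) by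
    simp only [Matrix.mul_assoc], hproj]
  exact fromBlocks_diag_mul_dilation_mul_fromBlocks_diag (transpose_one_sub_mul_transpose U)
    (transpose_one_sub_mul_transpose V) M

theorem one_sub_mul_transpose_mul_mul_one_sub [DecidableEq m] [DecidableEq n] [DecidableEq k]
    {S : Matrix k k ℝ} {A : Matrix m n ℝ} (hUA : Uᵀ * A = S * Vᵀ) (hAV : A * V = U * S)
    (hV : Vᵀ * V = 1) (E : Matrix m n ℝ) :
    (1 - U * Uᵀ) * (A + E) * (1 - V * Vᵀ) =
      (A - U * S * Vᵀ) + (E - U * Uᵀ * E - E * (V * Vᵀ) + U * (Uᵀ * E * V) * Vᵀ) := by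
  have hPA : U * Uᵀ * A = U * S * Vᵀ := by rw [Matrix.mul_assoc, hUA, Matrix.mul_assoc]
  have hAQ : A * (V * Vᵀ) = U * S * Vᵀ := by rw [← Matrix.mul_assoc, hAV]
  have hSQ : U * S * Vᵀ * (V * Vᵀ) = U * S * Vᵀ := by
    rw [Matrix.mul_assoc, ← Matrix.mul_assoc Vᵀ, hV, Matrix.one_mul]
  have hPEQ : U * Uᵀ * E * (V * Vᵀ) = U * (Uᵀ * E * V) * Vᵀ := by
    simp only [Matrix.mul_assoc]
  simp only [Matrix.sub_mul, Matrix.mul_sub, Matrix.one_mul, Matrix.mul_one, Matrix.mul_add,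
    Matrix.add_mul, hPA, hAQ, hSQ, hPEQ]
  abel

end Compression

section Deflation

variable {d₁ d₂ r : ℕ} {μ : ℝ}

theorem matInfNorm_mul_transpose_le_of_matCoherence_le {d : ℕ} {U : Matrix (Fin d) (Fin r) ℝ}
    (hd : 0 < d) (hr : 0 < r) (hU : Uᵀ * U = 1) (hμ : matCoherence U ≤ μ) :
    matInfNorm (U * Uᵀ) ≤ r * √μ :=
  calc matInfNorm (U * Uᵀ) ≤ r * √(μ / d) * √d :=
        (matInfNorm_mul_le U Uᵀ).trans (mul_le_mul (matInfNorm_le_of_matCoherence_le hr hμ)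
          (matOneNorm_le_sqrt hU) (matInfNorm_nonneg _) (by positivity))
    _ = r * √μ := by
        rw [mul_assoc, ← Real.sqrt_mul' _ (Nat.cast_nonneg d),
          div_mul_cancel₀ _ (Nat.cast_ne_zero.mpr hd.ne')]

theorem matOneNorm_mul_transpose {d : ℕ} (U : Matrix (Fin d) (Fin r) ℝ) :
    matOneNorm (U * Uᵀ) = matInfNorm (U * Uᵀ) := by
  rw [matOneNorm_eq_matInfNorm_transpose, transpose_mul, transpose_transpose]

theorem balancedNorm_deflation_le (hd₁ : 0 < d₁) (hd₂ : 0 < d₂) (hr : 0 < r)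
    {U : Matrix (Fin d₁) (Fin r) ℝ} {V : Matrix (Fin d₂) (Fin r) ℝ} {E : Matrix (Fin d₁) (Fin d₂) ℝ}
    {κ : ℝ} (hU : Uᵀ * U = 1) (hV : Vᵀ * V = 1) (hμU : matCoherence U ≤ μ)
    (hμV : matCoherence V ≤ μ) (hG : ∀ j l, |(Uᵀ * E * V) j l| ≤ κ) :
    balancedNorm (E - U * Uᵀ * E - E * (V * Vᵀ) + U * (Uᵀ * E * V) * Vᵀ) ≤
      (1 + 2 * r * √μ) * balancedNorm E + r ^ 2 * √μ * κ := by
  have : Nonempty (Fin r) := ⟨⟨0, hr⟩⟩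
  have hP := matInfNorm_mul_transpose_le_of_matCoherence_le hd₁ hr hU hμU
  have hQ := matInfNorm_mul_transpose_le_of_matCoherence_le hd₂ hr hV hμV
  have hGrow : matInfNorm (Uᵀ * E * V) ≤ r * κ := by
    simpa only [Fintype.card_fin] using matInfNorm_le_card_mul_of_abs_le hG
  have hGcol : matOneNorm (Uᵀ * E * V) ≤ r * κ := by
    rw [matOneNorm_eq_matInfNorm_transpose]
    simpa only [Fintype.card_fin] using
      matInfNorm_le_card_mul_of_abs_le (M := (Uᵀ * E * V)ᵀ) fun j l => hG l j
  have hUGV := balancedNorm_mul_mul_transpose_le hd₁ hd₂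
    (matInfNorm_le_of_matCoherence_le hr hμU) (matOneNorm_le_sqrt hU)
    (matInfNorm_le_of_matCoherence_le hr hμV) (matOneNorm_le_sqrt hV) hGrow hGcol
  have hPE := balancedNorm_mul_left_le hP ((matOneNorm_mul_transpose U).trans_le hP) E
  have hEQ := balancedNorm_mul_right_le hQ ((matOneNorm_mul_transpose V).trans_le hQ) E
  have h₁ := balancedNorm_add_le (E - U * Uᵀ * E - E * (V * Vᵀ)) (U * (Uᵀ * E * V) * Vᵀ)
  have h₂ := balancedNorm_sub_le (E - U * Uᵀ * E) (E * (V * Vᵀ))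
  have h₃ := balancedNorm_sub_le E (U * Uᵀ * E)
  linarith

theorem balancedNorm_compression_le (hd₁ : 0 < d₁) (hd₂ : 0 < d₂)
    (hr : 0 < r) {U : Matrix (Fin d₁) (Fin r) ℝ} {V : Matrix (Fin d₂) (Fin r) ℝ}
    {S : Matrix (Fin r) (Fin r) ℝ} {A E : Matrix (Fin d₁) (Fin d₂) ℝ} {κ : ℝ}
    (hU : Uᵀ * U = 1) (hV : Vᵀ * V = 1) (hμU : matCoherence U ≤ μ) (hμV : matCoherence V ≤ μ)
    (hG : ∀ j l, |(Uᵀ * E * V) j l| ≤ κ) (hUA : Uᵀ * A = S * Vᵀ) (hAV : A * V = U * S) :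
    balancedNorm ((1 - U * Uᵀ) * (A + E) * (1 - V * Vᵀ)) ≤
      balancedNorm (A - U * S * Vᵀ) + ((1 + 2 * r * √μ) * balancedNorm E + r ^ 2 * √μ * κ) := by
  rw [one_sub_mul_transpose_mul_mul_one_sub hUA hAV hV]
  exact (balancedNorm_add_le _ _).trans
    (add_le_add le_rfl (balancedNorm_deflation_le hd₁ hd₂ hr hU hV hμU hμV hG))

theorem dilationWeight_mul_sum_abs_compressed_dilation_le {l : Type*} [Fintype l]
    [DecidableEq l] {U : Matrix (Fin d₁) (Fin r) ℝ} {V : Matrix (Fin d₂) (Fin r) ℝ}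
    {W : Matrix (Fin d₁ ⊕ Fin d₂) l ℝ} (hU : Uᵀ * U = 1) (hV : Vᵀ * V = 1) (hW : Wᵀ * W = 1)
    (hUVW : (dilationBasis U V)ᵀ * W = 0) (hcard : d₁ + d₂ = 2 * r + Fintype.card l)
    (A E : Matrix (Fin d₁) (Fin d₂) ℝ) (i : Fin d₁ ⊕ Fin d₂) :
    dilationWeight d₁ d₂ i *
        ∑ k, |(W * (Wᵀ * (fromBlocks 0 A Aᵀ 0 + fromBlocks 0 E Eᵀ 0) * W) * Wᵀ) i k| /
          dilationWeight d₁ d₂ k ≤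
      balancedNorm ((1 - U * Uᵀ) * (A + E) * (1 - V * Vᵀ)) := by
  rw [fromBlocks_add, add_zero, add_zero, ← transpose_add,
    compressed_dilation_eq hU hV hW hUVW (by simp only [Fintype.card_sum, Fintype.card_fin]; omega)]
  exact dilationWeight_mul_sum_abs_fromBlocks_le _ i

end Deflation

theorem of_sum_eq_mul_diagonal_mul_transpose {ι m n κ : Type*} [Fintype κ] [DecidableEq κ]
    (σ : ι → ℝ) (u : ι → m → ℝ) (v : ι → n → ℝ) (e : κ → ι) :
    (of fun a b => ∑ k, σ (e k) * u (e k) a * v (e k) b) =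
      (of fun a j => u (e j) a) * diagonal (σ ∘ e) * (of fun b j => v (e j) b)ᵀ := by
  ext a b
  rw [of_apply, Matrix.mul_apply]
  refine Finset.sum_congr rfl fun k _ => ?_
  simp only [mul_diagonal, of_apply, transpose_apply, Function.comp_apply]
  ring

section SVD

variable {ι m n : Type*} [DecidableEq ι] {σ : ι → ℝ} {u : ι → m → ℝ}
  {v : ι → n → ℝ} {A : Matrix m n ℝ}

theorem sum_mul_apply_eq_of_svd [Fintype ι] [Fintype m]
    (hu : ∀ i j, ∑ a, u i a * u j a = if i = j then 1 else 0)
    (hA : ∀ a b, A a b = ∑ k, σ k * u k a * v k b) (i : ι) (b : n) :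
    ∑ a, u i a * A a b = σ i * v i b := by
  calc ∑ a, u i a * A a b = ∑ k, σ k * v k b * ∑ a, u i a * u k a := by
        simp only [hA, Finset.mul_sum]
        rw [Finset.sum_comm]
        exact Finset.sum_congr rfl fun k _ => Finset.sum_congr rfl fun a _ => by ring
    _ = σ i * v i b := by simp [hu]

variable {κ : Type*} [DecidableEq κ] (e : κ → ι)

theorem transpose_mul_self_of_orthonormal [Fintype m]
    (hu : ∀ i j, ∑ a, u i a * u j a = if i = j then 1 else 0) (he : Function.Injective e) :
    (of fun a j => u (e j) a)ᵀ * of (fun a j => u (e j) a) = 1 := by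
  ext j l
  simp [Matrix.mul_apply, hu, one_apply, he.eq_iff]

variable [Fintype κ]

theorem transpose_mul_eq_of_svd [Fintype ι] [Fintype m]
    (hu : ∀ i j, ∑ a, u i a * u j a = if i = j then 1 else 0)
    (hA : ∀ a b, A a b = ∑ k, σ k * u k a * v k b) :
    (of fun a j => u (e j) a)ᵀ * A = diagonal (σ ∘ e) * (of fun b j => v (e j) b)ᵀ := by
  ext j b
  rw [diagonal_mul]
  simpa [Matrix.mul_apply] using sum_mul_apply_eq_of_svd hu hA (e j) b

theorem mul_eq_of_svd [Fintype ι] [Fintype n]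
    (hv : ∀ i j, ∑ b, v i b * v j b = if i = j then 1 else 0)
    (hA : ∀ a b, A a b = ∑ k, σ k * u k a * v k b) :
    A * (of fun b j => v (e j) b) = (of fun a j => u (e j) a) * diagonal (σ ∘ e) := by
  have hAt : ∀ b a, Aᵀ b a = ∑ k, σ k * v k b * u k a := fun b a => by
    simp only [transpose_apply, hA, mul_right_comm]
  ext a j
  rw [mul_diagonal]
  simpa [Matrix.mul_apply, mul_comm] using sum_mul_apply_eq_of_svd hv hAt (e j) a

end SVD

theorem two_mul_add_le_four_mul {r μ τ κ : ℝ} (hr : 1 ≤ r) (hμ : 1 ≤ μ) (hτ : 0 ≤ τ)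
    (hκ : 0 ≤ κ) :
    2 * r * κ + ((1 + 2 * r * √μ) * τ + r ^ 2 * √μ * κ) ≤ 4 * r * μ * (τ + r * κ) := by
  have hs : √μ ≤ μ := (Real.sqrt_le_left (by linarith)).mpr (by nlinarith)
  nlinarith [mul_le_mul_of_nonneg_left hs (mul_nonneg (by linarith : 0 ≤ r) hτ),
    mul_le_mul_of_nonneg_left hs (mul_nonneg (by nlinarith : 0 ≤ r ^ 2) hκ),
    mul_le_mul_of_nonneg_left hμ hτ, mul_le_mul_of_nonneg_left hr hτ,
    mul_le_mul_of_nonneg_left (one_le_mul_of_one_le_of_one_le hr hμ)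
      (mul_nonneg (by linarith : 0 ≤ r) hκ)]

/-- Lower bound for the dilated linear operator in weighted max-norm, and invertibility
of L̄₁^d (Lemma B.2 of Fan–Wang–Zhong). -/
theorem dilated_linear_operator_lower_bound
    (d₁ d₂ r : ℕ) (hr : 0 < r) (hrm : r ≤ min d₁ d₂)
    (A E : Matrix (Fin d₁) (Fin d₂) ℝ)
    (σ : Fin (min d₁ d₂) → ℝ) (u : Fin (min d₁ d₂) → Fin d₁ → ℝ)
    (v : Fin (min d₁ d₂) → Fin d₂ → ℝ)
    (hu : ∀ i j, ∑ k, u i k * u j k = if i = j then (1 : ℝ) else 0)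
    (hv : ∀ i j, ∑ k, v i k * v j k = if i = j then (1 : ℝ) else 0)
    (hσdec : ∀ i j : Fin (min d₁ d₂), i ≤ j → σ j ≤ σ i)
    (hA : ∀ a b, A a b = ∑ k, σ k * u k a * v k b)
    (U : Matrix (Fin d₁) (Fin r) ℝ) (hU : U = Matrix.of fun a k => u (Fin.castLE hrm k) a)
    (V : Matrix (Fin d₂) (Fin r) ℝ) (hV : V = Matrix.of fun b k => v (Fin.castLE hrm k) b)
    (Ar : Matrix (Fin d₁) (Fin d₂) ℝ)
    (hAr : Ar = Matrix.of fun a b => ∑ k : Fin r,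
      σ (Fin.castLE hrm k) * u (Fin.castLE hrm k) a * v (Fin.castLE hrm k) b)
    (μ₀ τ₀ ε₀ κ₀ : ℝ)
    (hμ₀ : μ₀ = max (matCoherence U) (matCoherence V))
    (hτ₀ : τ₀ = max (Real.sqrt ((d₁ : ℝ) / (d₂ : ℝ)) * matInfNorm E)
                    (Real.sqrt ((d₂ : ℝ) / (d₁ : ℝ)) * matOneNorm E))
    (hε₀ : ε₀ = max (Real.sqrt ((d₁ : ℝ) / (d₂ : ℝ)) * matInfNorm (A - Ar))
                    (Real.sqrt ((d₂ : ℝ) / (d₁ : ℝ)) * matOneNorm (A - Ar)))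
    (hκ₀ : κ₀ = max (Real.sqrt d₁ * matMaxNorm (E * V))
                    (Real.sqrt d₂ * matMaxNorm (Eᵀ * U)))
    (Ad Ed : Matrix (Fin d₁ ⊕ Fin d₂) (Fin d₁ ⊕ Fin d₂) ℝ)
    (hAd : Ad = Matrix.fromBlocks 0 A Aᵀ 0)
    (hEd : Ed = Matrix.fromBlocks 0 E Eᵀ 0)
    (Vd : Matrix (Fin d₁ ⊕ Fin d₂) (Fin r ⊕ Fin r) ℝ)
    (hVd : Vd = (Real.sqrt 2)⁻¹ • Matrix.fromBlocks U U V (-V))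
    (Vdp : Matrix (Fin d₁ ⊕ Fin d₂) (Fin (d₁ + d₂ - 2 * r)) ℝ)
    (hVdp1 : Vdpᵀ * Vdp = 1) (hVdp2 : Vdᵀ * Vdp = 0)
    (Lam₁d : Matrix (Fin r ⊕ Fin r) (Fin r ⊕ Fin r) ℝ)
    (hLam₁d : Lam₁d = Matrix.diagonal (Sum.elim
      (fun i : Fin r => σ (Fin.castLE hrm i)) (fun i : Fin r => -σ (Fin.castLE hrm i))))
    (L₁d : Matrix (Fin r ⊕ Fin r) (Fin r ⊕ Fin r) ℝ)
    (hL₁d : L₁d = Lam₁d + Vdᵀ * Ed * Vd)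
    (L₂d : Matrix (Fin d₁ ⊕ Fin d₂) (Fin d₁ ⊕ Fin d₂) ℝ)
    (hL₂d : L₂d = Vdp * (Vdpᵀ * (Ad + Ed) * Vdp) * Vdpᵀ)
    : (∀ Q₀d : Matrix (Fin d₁ ⊕ Fin d₂) (Fin r ⊕ Fin r) ℝ, wMaxNorm Q₀d = 1 →
        σ (Fin.castLE hrm ⟨r - 1, by omega⟩) - 4 * (r : ℝ) * μ₀ * (τ₀ + (r : ℝ) * κ₀) - ε₀ ≤
          wMaxNorm (Q₀d * L₁d - L₂d * Q₀d)) ∧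
      (2 * κ₀ * (r : ℝ) * Real.sqrt μ₀ < σ (Fin.castLE hrm ⟨r - 1, by omega⟩) →
        IsUnit L₁d.det) := by
  have hd₁ : 0 < d₁ := by omega
  have hd₂ : 0 < d₂ := by omega
  have hUU : Uᵀ * U = 1 := hU ▸ transpose_mul_self_of_orthonormal _ hu (Fin.castLE_injective hrm)
  have hVV : Vᵀ * V = 1 := hV ▸ transpose_mul_self_of_orthonormal _ hv (Fin.castLE_injective hrm)
  have hArS : Ar = U * diagonal (σ ∘ Fin.castLE hrm) * Vᵀ := by
    rw [hAr, hU, hV]; exact of_sum_eq_mul_diagonal_mul_transpose σ u v _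
  have hμU : matCoherence U ≤ μ₀ := hμ₀ ▸ le_max_left _ _
  have hG := abs_transpose_mul_mul_apply_le hUU (hκ₀ ▸ le_max_left _ _ : √d₁ * _ ≤ κ₀)
  have hVd' : Vd = dilationBasis U V := hVd
  have hN : ∀ p q, |(Vdᵀ * Ed * Vd) p q| ≤ κ₀ :=
    hVd' ▸ hEd ▸ abs_dilationBasis_transpose_mul_dilation_mul_apply_le hG
  have hσ := le_abs_sum_elim_neg (f := fun i : Fin r => σ (Fin.castLE hrm i)) fun i =>
    hσdec (Fin.castLE hrm i) (Fin.castLE hrm ⟨r - 1, by omega⟩)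
      (Fin.le_def.mpr (by simp only [Fin.val_castLE]; omega))
  have hL₂ : ∀ i, dilationWeight d₁ d₂ i * ∑ k, |L₂d i k| / dilationWeight d₁ d₂ k ≤
      ε₀ + ((1 + 2 * r * √μ₀) * τ₀ + r ^ 2 * √μ₀ * κ₀) := fun i => by
    rw [hL₂d, hAd, hEd, hε₀, hτ₀, hArS]
    exact (dilationWeight_mul_sum_abs_compressed_dilation_le hUU hVV hVdp1 (hVd' ▸ hVdp2)
      (by rw [Fintype.card_fin]; omega) A E i).trans (balancedNorm_compression_le hd₁ hd₂ hr hUU hVV hμU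
        (hμ₀ ▸ le_max_right _ _) hG (hU ▸ hV ▸ transpose_mul_eq_of_svd _ hu hA)
        (hU ▸ hV ▸ mul_eq_of_svd _ hv hA))
  have hL₁ : L₁d = diagonal _ + Vdᵀ * Ed * Vd := hLam₁d ▸ hL₁d
  have hμ : 1 ≤ μ₀ := (one_le_matCoherence hUU hr).trans hμU
  have hκ : 0 ≤ κ₀ := (abs_nonneg _).trans (hG ⟨0, hr⟩ ⟨0, hr⟩)
  have hτ : 0 ≤ τ₀ := hτ₀.trans_ge (balancedNorm_nonneg E)
  have hcard : (Fintype.card (Fin r ⊕ Fin r) : ℝ) = 2 * r := by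
    rw [Fintype.card_sum, Fintype.card_fin]; push_cast; ring
  refine ⟨fun Q hQ => ?_, fun hgap => hL₁ ▸ isUnit_det_diagonal_add hσ hN (hcard ▸ ?_)⟩
  · have := sub_le_weightedMaxNorm_mul_sub_mul (dilationWeight_pos hd₁ hd₂) hσ hN hL₂ hQ
    rw [hcard] at this
    rw [wMaxNorm_eq_weightedMaxNorm, hL₁]
    linarith [two_mul_add_le_four_mul (Nat.one_le_cast.mpr hr) hμ hτ hκ]
  · have := mul_le_mul_of_nonneg_left (Real.one_le_sqrt.mpr hμ) (by positivity : 0 ≤ 2 * κ₀ * r)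
    linarith
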